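/- Fix real numbers A > 0 and C > 0, and for each B > 2√(AC) define I(B) = ∫_{r₁(B)}^{r₂(B)} √(−A + B/r − C/r²) dr, where r₁(B) = (B − √(B² − 4AC))/(2A) and r₂(B) = (B + √(B² − 4AC))/(2A). Then for every B > 2√(AC), the function I has derivative π/(2√A) at B, i.e. I'(B) = π/(2√A). -/

import Mathlib

/-!
On `[r₁, r₂]`, where `r₁ < r₂` are the roots of `Q(r) = -A r² + B r - C`, the integrand equals
`√Q / r`, which has the elementary primitive
`√Q + B / (2√A) · arcsin ((2Ar - B) / s) - √C · arcsin ((Br - 2C) / (rs))`, `s = √(B² - 4AC)`.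
Both arcsin arguments run from `-1` to `1` and `√Q` vanishes at the roots, so
`I(B) = π (B / (2√A) - √C)` for every `B > 2√(AC)`; an affine function of `B` near each such point.
-/

open Real intervalIntegral Set MeasureTheory

theorem HasDerivAt.arcsin_of_one_sub_sq_eq {f : ℝ → ℝ} {f' x v : ℝ} (hf : HasDerivAt f f' x)
    (hv : 0 < v) (h : 1 - f x ^ 2 = v ^ 2) :
    HasDerivAt (fun y => arcsin (f y)) (f' / v) x := by
  have hlt : f x ^ 2 < 1 := by nlinarith
  have hne : f x ≠ -1 ∧ f x ≠ 1 := by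
    constructor <;> rintro heq <;> rw [heq] at hlt <;> norm_num at hlt
  have hsqrt : √(1 - f x ^ 2) = v := by rw [h, sqrt_sq hv.le]
  rw [div_eq_inv_mul, ← one_div, ← hsqrt]
  exact (hasDerivAt_arcsin hne.1 hne.2).comp x hf

section Sommerfeld

variable {A B C s : ℝ}

theorem sqrt_neg_add_div_sub_div_sq {r : ℝ} (hr : 0 < r) :
    √(-A + B / r - C / r ^ 2) = √(-A * r ^ 2 + B * r - C) / r := by
  rw [show -A + B / r - C / r ^ 2 = (-A * r ^ 2 + B * r - C) / r ^ 2 by field_simp,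
    sqrt_div' _ (by positivity), sqrt_sq hr.le]

theorem neg_mul_sq_add_mul_sub_eq_mul (hA : A ≠ 0) (hs : s ^ 2 = B ^ 2 - 4 * A * C) (r : ℝ) :
    -A * r ^ 2 + B * r - C = A * (r - (B - s) / (2 * A)) * ((B + s) / (2 * A) - r) := by
  field_simp
  linear_combination -hs

theorem hasDerivAt_arcsin_two_mul_sub_div (hA : 0 < A) (hs : 0 < s)
    (hsq : s ^ 2 = B ^ 2 - 4 * A * C) {r : ℝ} (hQ : 0 < -A * r ^ 2 + B * r - C) :
    HasDerivAt (fun x => arcsin ((2 * A * x - B) / s)) (√A / √(-A * r ^ 2 + B * r - C)) r := by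
  have hu : HasDerivAt (fun x => (2 * A * x - B) / s) (2 * A / s) r := by
    simpa using (((hasDerivAt_id r).const_mul (2 * A)).sub_const B).div_const s
  have key := hu.arcsin_of_one_sub_sq_eq (v := 2 * √A * √(-A * r ^ 2 + B * r - C) / s)
    (by positivity) (by
      simp only [div_pow, mul_pow, sq_sqrt hA.le, sq_sqrt hQ.le]
      field_simp
      linear_combination hsq)
  convert key using 1
  have : 0 < √A := sqrt_pos.2 hA
  have : 0 < √(-A * r ^ 2 + B * r - C) := sqrt_pos.2 hQ
  field_simp
  rw [sq_sqrt hA.le]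

theorem hasDerivAt_arcsin_sub_two_mul_div_mul (hC : 0 < C) (hs : 0 < s)
    (hsq : s ^ 2 = B ^ 2 - 4 * A * C) {r : ℝ} (hr : 0 < r) (hQ : 0 < -A * r ^ 2 + B * r - C) :
    HasDerivAt (fun x => arcsin ((B * x - 2 * C) / (x * s)))
      (√C / (r * √(-A * r ^ 2 + B * r - C))) r := by
  have hw : HasDerivAt (fun x => (B * x - 2 * C) / (x * s)) (2 * C / (r ^ 2 * s)) r := by
    refine ((((hasDerivAt_id' r).const_mul B).sub_const (2 * C)).div
      ((hasDerivAt_id' r).mul_const s) (by positivity)).congr_deriv ?_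
    field_simp
    ring
  have key := hw.arcsin_of_one_sub_sq_eq (v := 2 * √C * √(-A * r ^ 2 + B * r - C) / (r * s))
    (by positivity) (by
      simp only [div_pow, mul_pow, sq_sqrt hC.le, sq_sqrt hQ.le]
      field_simp
      linear_combination r ^ 2 * hsq)
  convert key using 1
  have : 0 < √C := sqrt_pos.2 hC
  have : 0 < √(-A * r ^ 2 + B * r - C) := sqrt_pos.2 hQ
  field_simp
  rw [sq_sqrt hC.le]

theorem hasDerivAt_sqrt_quadratic {r : ℝ} (hQ : 0 < -A * r ^ 2 + B * r - C) :
    HasDerivAt (fun x => √(-A * x ^ 2 + B * x - C))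
      ((B - 2 * A * r) / (2 * √(-A * r ^ 2 + B * r - C))) r := by
  have hq : HasDerivAt (fun x => -A * x ^ 2 + B * x - C) (B - 2 * A * r) r :=
    (((hasDerivAt_pow 2 r).const_mul (-A)).add ((hasDerivAt_id' r).const_mul B)).sub_const C
      |>.congr_deriv (by norm_num; ring)
  exact hq.sqrt hQ.ne'

noncomputable def sommerfeldPrimitive (A B C s r : ℝ) : ℝ :=
  √(-A * r ^ 2 + B * r - C) + B / (2 * √A) * arcsin ((2 * A * r - B) / s)
    - √C * arcsin ((B * r - 2 * C) / (r * s))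

theorem hasDerivAt_sommerfeldPrimitive (hA : 0 < A) (hC : 0 < C) (hs : 0 < s)
    (hsq : s ^ 2 = B ^ 2 - 4 * A * C) {r : ℝ} (hr : 0 < r) (hQ : 0 < -A * r ^ 2 + B * r - C) :
    HasDerivAt (sommerfeldPrimitive A B C s) (√(-A * r ^ 2 + B * r - C) / r) r := by
  refine (((hasDerivAt_sqrt_quadratic hQ).add
    ((hasDerivAt_arcsin_two_mul_sub_div hA hs hsq hQ).const_mul (B / (2 * √A)))).sub
    ((hasDerivAt_arcsin_sub_two_mul_div_mul hC hs hsq hr hQ).const_mul √C)).congr_deriv ?_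
  have : 0 < √A := sqrt_pos.2 hA
  have hq2 := sq_sqrt hQ.le
  set q := √(-A * r ^ 2 + B * r - C)
  have : 0 < q := sqrt_pos.2 hQ
  field_simp
  rw [sq_sqrt hC.le]
  linear_combination -2 * hq2

theorem continuousOn_sommerfeldPrimitive (hs : s ≠ 0) :
    ContinuousOn (sommerfeldPrimitive A B C s) (Ioi 0) := by
  unfold sommerfeldPrimitive
  refine (by fun_prop : ContinuousOn _ _).sub
    (continuousOn_const.mul (continuous_arcsin.comp_continuousOn ?_))
  exact ContinuousOn.div (by fun_prop) (by fun_prop) fun r hr => mul_ne_zero hr.out.ne' hs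

theorem sommerfeldPrimitive_right_root (hA : A ≠ 0) (hs : s ≠ 0) (hBs : B + s ≠ 0)
    (hsq : s ^ 2 = B ^ 2 - 4 * A * C) :
    sommerfeldPrimitive A B C s ((B + s) / (2 * A)) = π / 2 * (B / (2 * √A) - √C) := by
  have hQ : -A * ((B + s) / (2 * A)) ^ 2 + B * ((B + s) / (2 * A)) - C = 0 := by
    rw [neg_mul_sq_add_mul_sub_eq_mul hA hsq]; ring
  have hu : (2 * A * ((B + s) / (2 * A)) - B) / s = 1 := by
    field_simp; ring
  have hw : (B * ((B + s) / (2 * A)) - 2 * C) / ((B + s) / (2 * A) * s) = 1 := by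
    field_simp; linear_combination -hsq
  simp only [sommerfeldPrimitive, hQ, hu, hw, sqrt_zero, arcsin_one]
  ring

theorem sommerfeldPrimitive_left_root (hA : A ≠ 0) (hs : s ≠ 0) (hBs : B - s ≠ 0)
    (hsq : s ^ 2 = B ^ 2 - 4 * A * C) :
    sommerfeldPrimitive A B C s ((B - s) / (2 * A)) = -(π / 2 * (B / (2 * √A) - √C)) := by
  have hQ : -A * ((B - s) / (2 * A)) ^ 2 + B * ((B - s) / (2 * A)) - C = 0 := by
    rw [neg_mul_sq_add_mul_sub_eq_mul hA hsq]; ring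
  have hu : (2 * A * ((B - s) / (2 * A)) - B) / s = -1 := by
    field_simp; ring
  have hw : (B * ((B - s) / (2 * A)) - 2 * C) / ((B - s) / (2 * A) * s) = -1 := by
    field_simp; linear_combination -hsq
  simp only [sommerfeldPrimitive, hQ, hu, hw, sqrt_zero, arcsin_neg_one]
  ring

theorem integral_sqrt_neg_add_div_sub_div_sq (hA : 0 < A) (hC : 0 < C)
    (hB : 2 * √(A * C) < B) :
    ∫ r in (B - √(B ^ 2 - 4 * A * C)) / (2 * A)..(B + √(B ^ 2 - 4 * A * C)) / (2 * A),
      √(-A + B / r - C / r ^ 2) = π * (B / (2 * √A) - √C) := by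
  have hB₀ : 0 < B := by linarith [sqrt_nonneg (A * C)]
  have hD : 0 < B ^ 2 - 4 * A * C := by
    nlinarith [sq_sqrt (mul_pos hA hC).le, sqrt_nonneg (A * C)]
  set s := √(B ^ 2 - 4 * A * C)
  have hsq : s ^ 2 = B ^ 2 - 4 * A * C := sq_sqrt hD.le
  have hs : 0 < s := sqrt_pos.2 hD
  have hsB : s < B := by nlinarith
  set r₁ := (B - s) / (2 * A)
  set r₂ := (B + s) / (2 * A)
  have hr₁ : 0 < r₁ := by apply div_pos <;> linarith
  have hr₁₂ : r₁ ≤ r₂ := div_le_div_of_nonneg_right (by linarith) (by positivity)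
  have hpos : ∀ r ∈ Icc r₁ r₂, 0 < r := fun r hr => hr₁.trans_le hr.1
  have hQ : ∀ r ∈ Ioo r₁ r₂, 0 < -A * r ^ 2 + B * r - C := fun r hr => by
    rw [neg_mul_sq_add_mul_sub_eq_mul hA.ne' hsq]
    exact mul_pos (mul_pos hA (sub_pos.2 hr.1)) (sub_pos.2 hr.2)
  have hint : IntervalIntegrable (fun r => √(-A * r ^ 2 + B * r - C) / r) volume r₁ r₂ := by
    refine ContinuousOn.intervalIntegrable (ContinuousOn.div (by fun_prop) continuousOn_id ?_)
    exact fun r hr => (hpos r (uIcc_of_le hr₁₂ ▸ hr)).ne'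
  rw [integral_congr fun r hr => sqrt_neg_add_div_sub_div_sq (hpos r (uIcc_of_le hr₁₂ ▸ hr)),
    integral_eq_sub_of_hasDerivAt_of_le hr₁₂
      ((continuousOn_sommerfeldPrimitive hs.ne').mono hpos)
      (fun r hr => hasDerivAt_sommerfeldPrimitive hA hC hs hsq (hpos r (Ioo_subset_Icc_self hr))
        (hQ r hr)) hint,
    sommerfeldPrimitive_right_root hA.ne' hs.ne' (by linarith) hsq,
    sommerfeldPrimitive_left_root hA.ne' hs.ne' (by linarith) hsq]
  ring

end Sommerfeld

/-- Differentiation of the Sommerfeld-type integral with respect to the parameter `B`: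
for fixed `A, C > 0`, the function
`I(B) = ∫_{r₁(B)}^{r₂(B)} √(-A + B/r - C/r²) dr` with
`r₁(B) = (B - √(B² - 4AC))/(2A)`, `r₂(B) = (B + √(B² - 4AC))/(2A)`,
has derivative `π/(2√A)` at every `B > 2√(AC)`. -/
theorem sommerfeld_integral_deriv (A C : ℝ) (hA : 0 < A) (hC : 0 < C)
    (I : ℝ → ℝ)
    (hI : ∀ B : ℝ, I B =
      ∫ r in ((B - Real.sqrt (B ^ 2 - 4 * A * C)) / (2 * A))..
              ((B + Real.sqrt (B ^ 2 - 4 * A * C)) / (2 * A)),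
        Real.sqrt (-A + B / r - C / r ^ 2))
    (B : ℝ) (hB : 2 * Real.sqrt (A * C) < B) :
    HasDerivAt I (Real.pi / (2 * Real.sqrt A)) B := by
  have hI_eq : I =ᶠ[nhds B] fun b => π * (b / (2 * √A) - √C) := by
    filter_upwards [Ioi_mem_nhds hB] with b hb
    rw [hI b, integral_sqrt_neg_add_div_sub_div_sq hA hC hb]
  refine HasDerivAt.congr_of_eventuallyEq ?_ hI_eq
  exact (((hasDerivAt_id' B).div_const (2 * √A)).sub_const √C).const_mul π
    |>.congr_deriv (by ring)
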